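/- arXiv:2605.01136 — 2 statements merged into one kernel-verified Lean document; each statement's English description precedes it below -/
import Mathlib

section
/- Let p(x) = Σ_{r=0}^{d} a_r x^r be a real polynomial, and let L, L̃ be symmetric positive semidefinite n×n matrices with (1-ε)L ⪯ L̃ ⪯ (1+ε)L, 0 < ε < 1, and operator norms of both L and L̃ at most B_L. Then ‖p(L) - p(L̃)‖ ≤ (Σ_{r=1}^{d} |a_r| · r · B_L^r) · ε, where ‖·‖ is the operator norm. -/
/-!
The sandwich `(1 - ε) L ⪯ L̃ ⪯ (1 + ε) L` says exactly `-(ε L) ⪯ L - L̃ ⪯ ε L`. The norm of a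
self-adjoint operator is the supremum of the absolute value of its Rayleigh quotient, so
`‖L - L̃‖ ≤ ε ‖L‖ ≤ ε B_L`. Telescoping `x^(r+1) - y^(r+1) = x (x^r - y^r) + (x - y) y^r` gives
`‖L^r - L̃^r‖ ≤ r B_L^(r-1) ‖L - L̃‖`, and the triangle inequality sums these over the coefficients.
-/

open Matrix BigOperators Finset

noncomputable def frobNorm {m n : ℕ} (A : Matrix (Fin m) (Fin n) ℝ) : ℝ :=
  Real.sqrt (∑ i, ∑ j, (A i j)^2)

noncomputable def opNorm {m n : ℕ} (A : Matrix (Fin m) (Fin n) ℝ) : ℝ :=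
  ‖LinearMap.toContinuousLinearMap (Matrix.toEuclideanLin A)‖

theorem norm_pow_sub_pow_le {R : Type*} [NormedRing R] {x y : R} {B : ℝ}
    (hx : ‖x‖ ≤ B) (hy : ‖y‖ ≤ B) : ∀ r : ℕ, ‖x ^ r - y ^ r‖ ≤ r * B ^ (r - 1) * ‖x - y‖
  | 0 => by simp
  | 1 => by simp
  | r + 2 => by
    have ih := norm_pow_sub_pow_le hx hy (r + 1)
    rw [Nat.add_sub_cancel] at ih
    have hB : 0 ≤ B := (norm_nonneg x).trans hx
    have hyr : ‖y ^ (r + 1)‖ ≤ B ^ (r + 1) :=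
      (norm_pow_le' y r.succ_pos).trans (pow_le_pow_left₀ (norm_nonneg y) hy _)
    calc ‖x ^ (r + 2) - y ^ (r + 2)‖
        = ‖x * (x ^ (r + 1) - y ^ (r + 1)) + (x - y) * y ^ (r + 1)‖ := by
          rw [mul_sub, sub_mul, ← pow_succ', ← pow_succ', sub_add_sub_cancel]
      _ ≤ ‖x‖ * ‖x ^ (r + 1) - y ^ (r + 1)‖ + ‖x - y‖ * ‖y ^ (r + 1)‖ :=
          norm_add_le_of_le (norm_mul_le _ _) (norm_mul_le _ _)
      _ ≤ B * ((r + 1 : ℕ) * B ^ r * ‖x - y‖) + ‖x - y‖ * B ^ (r + 1) := by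
          gcongr
      _ = (r + 2 : ℕ) * B ^ (r + 2 - 1) * ‖x - y‖ := by push_cast; ring

theorem norm_sum_smul_pow_sub_sum_smul_pow_le {𝕜 R : Type*} [NormedField 𝕜] [NormedRing R]
    [NormedSpace 𝕜 R] {x y : R} {B : ℝ} (hx : ‖x‖ ≤ B) (hy : ‖y‖ ≤ B) (s : Finset ℕ)
    (a : ℕ → 𝕜) :
    ‖∑ r ∈ s, a r • x ^ r - ∑ r ∈ s, a r • y ^ r‖ ≤
      ∑ r ∈ s, ‖a r‖ * (r * B ^ (r - 1) * ‖x - y‖) := by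
  rw [← sum_sub_distrib]
  refine (norm_sum_le _ _).trans (sum_le_sum fun r _ => ?_)
  rw [← smul_sub]
  exact (norm_smul_le _ _).trans (by gcongr; exact norm_pow_sub_pow_le hx hy r)

namespace ContinuousLinearMap

open RCLike
open scoped InnerProductSpace

variable {𝕜 E : Type*} [RCLike 𝕜] [NormedAddCommGroup E] [InnerProductSpace 𝕜 E]

theorem norm_le_norm_of_neg_le_of_le {S T : E →L[𝕜] E} (h₁ : -S ≤ T) (h₂ : T ≤ S) :
    ‖T‖ ≤ ‖S‖ := by
  rw [le_def, sub_neg_eq_add] at h₁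
  rw [le_def] at h₂
  have hT : (T : E →ₗ[𝕜] E).IsSymmetric := fun x y => by
    have h := h₁.isSymmetric.sub h₂.isSymmetric x y
    simp only [LinearMap.sub_apply, coe_coe, _root_.add_apply, _root_.sub_apply, inner_add_left,
      inner_sub_left, inner_add_right, inner_sub_right] at h
    linear_combination h / 2
  have hquad (x : E) : |re ⟪T x, x⟫_𝕜| ≤ re ⟪S x, x⟫_𝕜 := by
    have hplus := h₁.re_inner_nonneg_left x
    have hminus := h₂.re_inner_nonneg_left x
    simp only [_root_.add_apply, _root_.sub_apply, inner_add_left, inner_sub_left, map_add,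
      map_sub] at hplus hminus
    exact abs_le.mpr ⟨by linarith, by linarith⟩
  rw [norm_eq_iSup_rayleighQuotient T hT]
  refine ciSup_le fun x => le_trans ?_ ((le_abs_self _).trans (S.rayleighQuotient_le_norm x))
  simp only [rayleighQuotient, reApplyInnerSelf_apply, abs_div, abs_sq]
  exact div_le_div_of_nonneg_right (hquad x) (sq_nonneg _)

end ContinuousLinearMap

open scoped Matrix.Norms.L2Operator MatrixOrder

theorem Matrix.l2_opNorm_le_of_neg_le_of_le {𝕜 n : Type*} [RCLike 𝕜] [Fintype n] [DecidableEq n]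
    {S T : Matrix n n 𝕜} (h₁ : -S ≤ T) (h₂ : T ≤ S) : ‖T‖ ≤ ‖S‖ := by
  rw [← l2_opNorm_toEuclideanCLM, ← l2_opNorm_toEuclideanCLM]
  refine ContinuousLinearMap.norm_le_norm_of_neg_le_of_le ?_ ?_
  · rw [ContinuousLinearMap.le_def, ← map_neg, ← map_sub]
    exact Matrix.isPositive_toEuclideanLin_iff.mpr h₁
  · rw [ContinuousLinearMap.le_def, ← map_sub]
    exact Matrix.isPositive_toEuclideanLin_iff.mpr h₂

theorem opNorm_eq_l2_opNorm {m n : ℕ} (A : Matrix (Fin m) (Fin n) ℝ) : opNorm A = ‖A‖ := rfl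

theorem poly_filter_stability_general {n : ℕ} (d : ℕ) (a : ℕ → ℝ)
    (L Lt : Matrix (Fin n) (Fin n) ℝ) (ε B_L : ℝ)
    (hε : 0 < ε)
    (hlow : (Lt - (1 - ε) • L).PosSemidef)
    (hupp : ((1 + ε) • L - Lt).PosSemidef)
    (hBL : opNorm L ≤ B_L) (hBLt : opNorm Lt ≤ B_L) :
    opNorm ((∑ r ∈ Finset.range (d + 1), a r • L ^ r) -
        ∑ r ∈ Finset.range (d + 1), a r • Lt ^ r) ≤
      (∑ r ∈ Finset.Icc 1 d, |a r| * r * B_L ^ r) * ε := by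
  rw [opNorm_eq_l2_opNorm] at hBL hBLt ⊢
  have hB : 0 ≤ B_L := (norm_nonneg L).trans hBL
  have hdiff : ‖L - Lt‖ ≤ ε * B_L := by
    refine (Matrix.l2_opNorm_le_of_neg_le_of_le (S := ε • L) ?_ ?_).trans ?_
    · rw [Matrix.le_iff, show L - Lt - -(ε • L) = (1 + ε) • L - Lt by module]
      exact hupp
    · rw [Matrix.le_iff, show ε • L - (L - Lt) = Lt - (1 - ε) • L by module]
      exact hlow
    · rw [norm_smul, Real.norm_of_nonneg hε.le]
      exact mul_le_mul_of_nonneg_left hBL hε.le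
  calc _ ≤ ∑ r ∈ range (d + 1), ‖a r‖ * (r * B_L ^ (r - 1) * ‖L - Lt‖) :=
        norm_sum_smul_pow_sub_sum_smul_pow_le hBL hBLt _ a
    _ ≤ ∑ r ∈ range (d + 1), ‖a r‖ * (r * B_L ^ (r - 1) * (ε * B_L)) := by gcongr
    _ = ∑ r ∈ range (d + 1), |a r| * r * B_L ^ r * ε := by
        refine sum_congr rfl fun r _ => ?_
        rcases r with _ | r
        · simp
        · rw [Real.norm_eq_abs, Nat.add_sub_cancel, pow_succ]; ring
    _ = _ := by
        rw [sum_mul, sum_range_eq_add_Ico _ d.add_one_pos, Ico_add_one_right_eq_Icc]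
        simp

theorem poly_filter_stability {n : ℕ} (d : ℕ) (a : ℕ → ℝ)
    (L Lt : Matrix (Fin n) (Fin n) ℝ) (ε B_L : ℝ)
    (hε : 0 < ε) (hε1 : ε < 1)
    (hL : L.PosSemidef) (hLt : Lt.PosSemidef)
    (hlow : (Lt - (1 - ε) • L).PosSemidef)
    (hupp : ((1 + ε) • L - Lt).PosSemidef)
    (hBL : opNorm L ≤ B_L) (hBLt : opNorm Lt ≤ B_L) :
    opNorm ((∑ r ∈ Finset.range (d + 1), a r • L ^ r) -
        ∑ r ∈ Finset.range (d + 1), a r • Lt ^ r) ≤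
      (∑ r ∈ Finset.Icc 1 d, |a r| * r * B_L ^ r) * ε :=
  poly_filter_stability_general d a L Lt ε B_L hε hlow hupp hBL hBLt
end

section
/- Let Z, Z̃ be n×d real matrices with rows z_i, z̃_i whose Euclidean norms are all at most B. Let S ⊆ {1,...,n} with |S| = m ≥ 1, define μ = (1/m)Σ_{i∈S} z_i, Σ_c = (1/m)Σ_{i∈S}(z_i-μ)(z_i-μ)ᵀ, and analogously μ̃, Σ̃_c from Z̃. Then the operator norm of Σ_c - Σ̃_c is at most (8B/√m)·‖Z - Z̃‖_F. -/
open Matrix BigOperators Finset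

/-!
Centered at its empirical mean, every vector of a class has norm at most `2B`, and the class
covariance is the average of the rank-one operators `aᵢ aᵢᵀ`. Since
`‖a aᵀ - b bᵀ‖ ≤ (‖a‖ + ‖b‖) ‖a - b‖`, the two covariances differ by at most `4B` times the
average of `‖aᵢ - ãᵢ‖`. As `aᵢ - ãᵢ = (zᵢ - z̃ᵢ) - (μ - μ̃)` and `‖μ - μ̃‖` is at most the average
of `‖zᵢ - z̃ᵢ‖`, that average is at most `(2/m) ∑ ‖zᵢ - z̃ᵢ‖ ≤ (2/√m) ‖Z - Z̃‖_F` by Cauchy–Schwarz.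
-/

open InnerProductSpace

section Mean

variable {ι E : Type*} [NormedAddCommGroup E] [NormedSpace ℝ E] {S : Finset ι} {v w : ι → E}

noncomputable def empiricalMean (S : Finset ι) (v : ι → E) : E := (#S : ℝ)⁻¹ • ∑ i ∈ S, v i

lemma card_mul_norm_empiricalMean_le (S : Finset ι) (v : ι → E) :
    #S * ‖empiricalMean S v‖ ≤ ∑ i ∈ S, ‖v i‖ := by
  rcases S.eq_empty_or_nonempty with rfl | hS
  · simp
  have hcard : (0 : ℝ) < #S := by exact_mod_cast hS.card_pos
  rw [empiricalMean, norm_smul, norm_inv, Real.norm_natCast, mul_inv_cancel_left₀ hcard.ne']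
  exact norm_sum_le _ _

lemma norm_empiricalMean_le (hS : S.Nonempty) {B : ℝ} (hv : ∀ i ∈ S, ‖v i‖ ≤ B) :
    ‖empiricalMean S v‖ ≤ B := by
  have hcard : (0 : ℝ) < #S := by exact_mod_cast hS.card_pos
  refine le_of_mul_le_mul_left ?_ hcard
  calc #S * ‖empiricalMean S v‖ ≤ ∑ i ∈ S, ‖v i‖ := card_mul_norm_empiricalMean_le S v
    _ ≤ ∑ _i ∈ S, B := sum_le_sum hv
    _ = #S * B := by rw [sum_const, nsmul_eq_mul]

lemma empiricalMean_sub_empiricalMean :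
    empiricalMean S v - empiricalMean S w = empiricalMean S (v - w) := by
  simp only [empiricalMean, ← smul_sub, ← sum_sub_distrib, Pi.sub_apply]

lemma sum_norm_sub_empiricalMean_sub_le :
    ∑ i ∈ S, ‖(v i - empiricalMean S v) - (w i - empiricalMean S w)‖
      ≤ 2 * ∑ i ∈ S, ‖v i - w i‖ := by
  calc ∑ i ∈ S, ‖(v i - empiricalMean S v) - (w i - empiricalMean S w)‖
      ≤ ∑ i ∈ S, (‖v i - w i‖ + ‖empiricalMean S (v - w)‖) := by
        refine sum_le_sum fun i _ ↦ ?_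
        rw [sub_sub_sub_comm, empiricalMean_sub_empiricalMean]
        exact norm_sub_le _ _
    _ = ∑ i ∈ S, ‖v i - w i‖ + #S * ‖empiricalMean S (v - w)‖ := by
        rw [sum_add_distrib, sum_const, nsmul_eq_mul]
    _ ≤ 2 * ∑ i ∈ S, ‖v i - w i‖ := by
        have := card_mul_norm_empiricalMean_le S (v - w)
        simp only [Pi.sub_apply] at this
        linarith

end Mean

section Covariance

variable {ι E : Type*} [NormedAddCommGroup E] [InnerProductSpace ℝ E] {S : Finset ι} {v w : ι → E}

noncomputable def empiricalCovariance (S : Finset ι) (v : ι → E) : E →L[ℝ] E :=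
  (#S : ℝ)⁻¹ • ∑ i ∈ S, rankOne ℝ (v i - empiricalMean S v) (v i - empiricalMean S v)

lemma norm_rankOne_self_sub_rankOne_self_le (a b : E) :
    ‖rankOne ℝ a a - rankOne ℝ b b‖ ≤ (‖a‖ + ‖b‖) * ‖a - b‖ := by
  have hsplit : rankOne ℝ a a - rankOne ℝ b b = rankOne ℝ a (a - b) + rankOne ℝ (a - b) b := by
    simp only [map_sub, _root_.sub_apply]
    abel
  calc ‖rankOne ℝ a a - rankOne ℝ b b‖ ≤ ‖a‖ * ‖a - b‖ + ‖a - b‖ * ‖b‖ := by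
        rw [hsplit]
        exact (norm_add_le _ _).trans_eq (by rw [norm_rankOne, norm_rankOne])
    _ = (‖a‖ + ‖b‖) * ‖a - b‖ := by ring

lemma norm_empiricalCovariance_sub_le_sum (hS : S.Nonempty) {B : ℝ}
    (hv : ∀ i ∈ S, ‖v i‖ ≤ B) (hw : ∀ i ∈ S, ‖w i‖ ≤ B) :
    ‖empiricalCovariance S v - empiricalCovariance S w‖
      ≤ 8 * B / #S * ∑ i ∈ S, ‖v i - w i‖ := by
  set a := fun i ↦ v i - empiricalMean S v
  set b := fun i ↦ w i - empiricalMean S w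
  have ha : ∀ i ∈ S, ‖a i‖ ≤ 2 * B := fun i hi ↦ by
    linarith [norm_sub_le (v i) (empiricalMean S v), hv i hi, norm_empiricalMean_le hS hv]
  have hb : ∀ i ∈ S, ‖b i‖ ≤ 2 * B := fun i hi ↦ by
    linarith [norm_sub_le (w i) (empiricalMean S w), hw i hi, norm_empiricalMean_le hS hw]
  have hB : 0 ≤ B := (norm_nonneg _).trans (hv _ hS.choose_spec)
  calc ‖empiricalCovariance S v - empiricalCovariance S w‖
      = (#S : ℝ)⁻¹ * ‖∑ i ∈ S, (rankOne ℝ (a i) (a i) - rankOne ℝ (b i) (b i))‖ := by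
        rw [empiricalCovariance, empiricalCovariance, ← smul_sub, ← sum_sub_distrib, norm_smul,
          norm_inv, Real.norm_natCast]
    _ ≤ (#S : ℝ)⁻¹ * ∑ i ∈ S, 4 * B * ‖a i - b i‖ := by
        gcongr
        refine (norm_sum_le _ _).trans (sum_le_sum fun i hi ↦ ?_)
        refine (norm_rankOne_self_sub_rankOne_self_le _ _).trans ?_
        gcongr
        linarith [ha i hi, hb i hi]
    _ ≤ (#S : ℝ)⁻¹ * (4 * B * (2 * ∑ i ∈ S, ‖v i - w i‖)) := by
        rw [← mul_sum]
        gcongr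
        exact sum_norm_sub_empiricalMean_sub_le
    _ = 8 * B / #S * ∑ i ∈ S, ‖v i - w i‖ := by ring

theorem norm_empiricalCovariance_sub_le (hS : S.Nonempty) {B : ℝ}
    (hv : ∀ i ∈ S, ‖v i‖ ≤ B) (hw : ∀ i ∈ S, ‖w i‖ ≤ B) :
    ‖empiricalCovariance S v - empiricalCovariance S w‖
      ≤ 8 * B / √(#S) * √(∑ i ∈ S, ‖v i - w i‖ ^ 2) := by
  have hcard : (0 : ℝ) < #S := by exact_mod_cast hS.card_pos
  have hB : 0 ≤ B := (norm_nonneg _).trans (hv _ hS.choose_spec)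
  have hCS : ∑ i ∈ S, ‖v i - w i‖ ≤ √(#S) * √(∑ i ∈ S, ‖v i - w i‖ ^ 2) := by
    simpa using Real.sum_mul_le_sqrt_mul_sqrt S (fun _ ↦ 1) (fun i ↦ ‖v i - w i‖)
  calc ‖empiricalCovariance S v - empiricalCovariance S w‖
      ≤ 8 * B / #S * ∑ i ∈ S, ‖v i - w i‖ := norm_empiricalCovariance_sub_le_sum hS hv hw
    _ ≤ 8 * B / #S * (√(#S) * √(∑ i ∈ S, ‖v i - w i‖ ^ 2)) := by gcongr
    _ = 8 * B / √(#S) * √(∑ i ∈ S, ‖v i - w i‖ ^ 2) := by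
        nth_rw 1 [← Real.mul_self_sqrt hcard.le]
        field_simp

end Covariance

section Matrix

variable {ι κ : Type*} [Fintype κ]

lemma norm_toLp_eq_sqrt_sum_sq (x : κ → ℝ) :
    ‖(WithLp.toLp 2 x : EuclideanSpace ℝ κ)‖ = √(∑ k, x k ^ 2) := by
  simp [EuclideanSpace.norm_eq]

lemma empiricalMean_toLp_rows (z : ι → κ → ℝ) {S : Finset ι} {μ : κ → ℝ}
    (hμ : ∀ k, μ k = 1 / #S * ∑ i ∈ S, z i k) :
    empiricalMean S (fun i ↦ (WithLp.toLp 2 (z i) : EuclideanSpace ℝ κ)) = WithLp.toLp 2 μ := by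
  ext k
  simp [empiricalMean, hμ, Finset.sum_apply]

lemma toEuclideanLin_eq_empiricalCovariance [DecidableEq κ] (z : ι → κ → ℝ) {S : Finset ι}
    {μ : κ → ℝ} (hμ : ∀ k, μ k = 1 / #S * ∑ i ∈ S, z i k) {C : Matrix κ κ ℝ}
    (hC : ∀ a b, C a b = 1 / #S * ∑ i ∈ S, (z i a - μ a) * (z i b - μ b)) :
    LinearMap.toContinuousLinearMap (toEuclideanLin C)
      = empiricalCovariance S (fun i ↦ (WithLp.toLp 2 (z i) : EuclideanSpace ℝ κ)) := by
  suffices C = toEuclideanLin.symm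
      (empiricalCovariance S (fun i ↦ (WithLp.toLp 2 (z i) : EuclideanSpace ℝ κ))) by
    rw [this, LinearEquiv.apply_symm_apply]
    rfl
  rw [empiricalCovariance, empiricalMean_toLp_rows z hμ]
  simp only [ContinuousLinearMap.toLinearMap_smul,
    ContinuousLinearMap.toLinearMap_sum, map_smul, map_sum,
    symm_toEuclideanLin_rankOne]
  ext a b
  simp [hC, Matrix.sum_apply, vecMulVec_apply]

end Matrix

lemma sqrt_sum_norm_toLp_sub_sq_le_frobNorm {n d : ℕ} (Z Zt : Matrix (Fin n) (Fin d) ℝ) (S : Finset (Fin n)) :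
    √(∑ i ∈ S, ‖(WithLp.toLp 2 (Z i) : EuclideanSpace ℝ (Fin d)) - WithLp.toLp 2 (Zt i)‖ ^ 2)
      ≤ frobNorm (Z - Zt) := by
  refine Real.sqrt_le_sqrt ((sum_le_sum_of_subset_of_nonneg (subset_univ S)
    fun i _ _ ↦ by positivity).trans_eq (sum_congr rfl fun i _ ↦ ?_))
  rw [← WithLp.toLp_sub, EuclideanSpace.real_norm_sq_eq]
  rfl

theorem class_covariance_stability {n d : ℕ} (Z Zt : Matrix (Fin n) (Fin d) ℝ)
    (B : ℝ)
    (hZ : ∀ i, Real.sqrt (∑ k, (Z i k)^2) ≤ B)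
    (hZt : ∀ i, Real.sqrt (∑ k, (Zt i k)^2) ≤ B)
    (S : Finset (Fin n)) (m : ℕ) (hm : S.card = m) (hm1 : 1 ≤ m)
    (μ μt : Fin d → ℝ)
    (hμ : ∀ k, μ k = (1 / (m : ℝ)) * ∑ i ∈ S, Z i k)
    (hμt : ∀ k, μt k = (1 / (m : ℝ)) * ∑ i ∈ S, Zt i k)
    (Sc Sct : Matrix (Fin d) (Fin d) ℝ)
    (hSc : ∀ a b, Sc a b = (1 / (m : ℝ)) * ∑ i ∈ S, (Z i a - μ a) * (Z i b - μ b))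
    (hSt : ∀ a b, Sct a b = (1 / (m : ℝ)) * ∑ i ∈ S, (Zt i a - μt a) * (Zt i b - μt b)) :
    opNorm (Sc - Sct) ≤ (8 * B / Real.sqrt m) * frobNorm (Z - Zt) := by
  subst hm
  have hS : S.Nonempty := card_pos.mp hm1
  have hB : 0 ≤ B := (Real.sqrt_nonneg _).trans (hZ hS.choose)
  rw [opNorm, map_sub, map_sub, toEuclideanLin_eq_empiricalCovariance Z hμ hSc,
    toEuclideanLin_eq_empiricalCovariance Zt hμt hSt]
  calc _ ≤ 8 * B / √(#S) * √(∑ i ∈ S, ‖(WithLp.toLp 2 (Z i) : EuclideanSpace ℝ (Fin d))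
          - WithLp.toLp 2 (Zt i)‖ ^ 2) :=
        norm_empiricalCovariance_sub_le hS (fun i _ ↦ (norm_toLp_eq_sqrt_sum_sq _).trans_le (hZ i))
          (fun i _ ↦ (norm_toLp_eq_sqrt_sum_sq _).trans_le (hZt i))
    _ ≤ 8 * B / √(#S) * frobNorm (Z - Zt) := by
        gcongr
        exact sqrt_sum_norm_toLp_sub_sq_le_frobNorm Z Zt S
end
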